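/- Let K : [0,T]×[0,T] → ℝ be continuous with K(t,t) = 1 for all t, K continuously differentiable in its first argument, and f continuously differentiable with f(0) = 0. Then the Volterra integral equation of the first kind ∫₀ᵗ K(t,τ) x(τ) dτ = f(t), t ∈ [0,T], has at most one continuous solution x on [0,T]. -/

import Mathlib

/-!
Since `K(t, τ) = 1 + ∫_τ^t K'(s, τ) ds`, swapping the order of integration turns the first-kind
equation into `∫₀ᵗ (x + V x) = f` with `V x (s) = ∫₀ˢ K'(s, τ) x(τ) dτ`. Differentiating, the
difference `g` of two solutions satisfies the second-kind equation `g + V g = 0`, hence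
`|g t| ≤ M ∫₀ᵗ |g|` with `M` a bound for `K'`, and Gronwall's inequality forces `g = 0`.
Kernels and functions continuous on `[0, T]` are first extended continuously to `ℝ` by clamping,
so that the parametric-integral lemmas can be applied globally.
-/

open intervalIntegral Set MeasureTheory Function Filter Topology

section Extension

variable {X : Type*} [TopologicalSpace X]

theorem exists_continuous_eqOn_Icc {a b : ℝ} (hab : a ≤ b) {x : ℝ → X}
    (hx : ContinuousOn x (Icc a b)) : ∃ y : ℝ → X, Continuous y ∧ EqOn y x (Icc a b) :=
  ⟨fun s => x (projIcc a b hab s),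
    hx.comp_continuous (continuous_subtype_val.comp continuous_projIcc)
      fun s => (projIcc a b hab s).2,
    fun s hs => by simp [projIcc_of_mem hab hs]⟩

theorem exists_continuous_eqOn_Icc_prod {a b : ℝ} (hab : a ≤ b) {K : ℝ → ℝ → X}
    (hK : ContinuousOn (uncurry K) (Icc a b ×ˢ Icc a b)) :
    ∃ B : ℝ → ℝ → X, Continuous (uncurry B) ∧ ∀ s ∈ Icc a b, ∀ τ ∈ Icc a b, B s τ = K s τ := by
  let c : ℝ → ℝ := fun s => projIcc a b hab s
  have hc : Continuous c := continuous_subtype_val.comp continuous_projIcc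
  refine ⟨fun s τ => K (c s) (c τ), hK.comp_continuous (hc.prodMap hc) fun p =>
    ⟨(projIcc a b hab p.1).2, (projIcc a b hab p.2).2⟩, fun s hs τ hτ => ?_⟩
  simp [c, projIcc_of_mem hab hs, projIcc_of_mem hab hτ]

end Extension

section

variable {E : Type*} [NormedAddCommGroup E] [NormedSpace ℝ E]

theorem eqOn_of_forall_integral_eq [CompleteSpace E] {a b : ℝ} (hab : a < b) {φ ψ : ℝ → E}
    (hφ : Continuous φ) (hψ : Continuous ψ)
    (h : ∀ t ∈ Icc a b, ∫ s in a..t, φ s = ∫ s in a..t, ψ s) :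
    EqOn φ ψ (Icc a b) := by
  have hIoo : EqOn φ ψ (Ioo a b) := fun t ht => by
    have hprim : (fun u => ∫ s in a..u, φ s) =ᶠ[𝓝 t] fun u => ∫ s in a..u, ψ s :=
      eventually_of_mem (isOpen_Ioo.mem_nhds ht) fun u hu => h u (Ioo_subset_Icc_self hu)
    rw [← hφ.deriv_integral φ a t, ← hψ.deriv_integral ψ a t, hprim.deriv_eq]
  simpa [closure_Ioo hab.ne] using hIoo.closure hφ hψ

theorem intervalIntegral_integral_swap_triangle {F : ℝ → ℝ → E} (hF : Continuous (uncurry F))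
    {t : ℝ} (ht : 0 ≤ t) :
    ∫ τ in (0:ℝ)..t, ∫ s in τ..t, F s τ = ∫ s in (0:ℝ)..t, ∫ τ in (0:ℝ)..s, F s τ := by
  let μ := volume.restrict (Ioc (0:ℝ) t)
  -- both sides are iterated integrals over `(0, t]²` of `F` cut off outside the triangle `τ < s`
  let G : ℝ → ℝ → E := fun s τ => if τ < s then F s τ else 0
  have hG : Integrable (uncurry fun τ s => G s τ) (μ.prod μ) := by
    obtain ⟨C, hC⟩ := (isCompact_Icc.prod isCompact_Icc).exists_bound_of_continuousOn
      (hF.comp continuous_swap).continuousOn (s := Icc (0:ℝ) t ×ˢ Icc (0:ℝ) t)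
    refine Integrable.of_bound ?_ C ?_
    · exact ((hF.comp continuous_swap).stronglyMeasurable.ite (measurableSet_lt measurable_fst
        measurable_snd) stronglyMeasurable_const).aestronglyMeasurable
    · rw [Measure.prod_restrict]
      filter_upwards [ae_restrict_mem (measurableSet_Ioc.prod measurableSet_Ioc)] with p hp
      show ‖G p.2 p.1‖ ≤ C
      by_cases h : p.1 < p.2
      · simp only [G, h, if_true]
        exact hC p (prod_mono Ioc_subset_Icc_self Ioc_subset_Icc_self hp)
      · simpa [G, h] using (norm_nonneg _).trans (hC (0, 0) ⟨⟨le_rfl, ht⟩, le_rfl, ht⟩)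
  have inner_left : ∀ τ ∈ Ioc 0 t, ∫ s in τ..t, F s τ = ∫ s, G s τ ∂μ := fun τ hτ => by
    have : Ioc τ t = Ioc 0 t ∩ Ioi τ := by rw [Ioc_inter_Ioi, sup_eq_right.2 hτ.1.le]
    rw [integral_of_le hτ.2, this, ← setIntegral_indicator measurableSet_Ioi]
    rfl
  have inner_right : ∀ s ∈ Ioc 0 t, ∫ τ in (0:ℝ)..s, F s τ = ∫ τ, G s τ ∂μ := fun s hs => by
    have : Ioo 0 s = Ioc 0 t ∩ Iio s := by
      ext τ
      simp only [mem_Ioo, mem_inter_iff, mem_Ioc, mem_Iio]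
      exact ⟨fun h => ⟨⟨h.1, h.2.le.trans hs.2⟩, h.2⟩, fun h => ⟨h.1.1, h.2⟩⟩
    rw [integral_of_le hs.1.le, integral_Ioc_eq_integral_Ioo, this,
      ← setIntegral_indicator measurableSet_Iio]
    rfl
  calc ∫ τ in (0:ℝ)..t, ∫ s in τ..t, F s τ = ∫ τ, ∫ s, G s τ ∂μ ∂μ := by
        rw [integral_of_le ht]; exact setIntegral_congr_fun measurableSet_Ioc inner_left
    _ = ∫ s, ∫ τ, G s τ ∂μ ∂μ := integral_integral_swap hG
    _ = ∫ s in (0:ℝ)..t, ∫ τ in (0:ℝ)..s, F s τ := by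
        rw [integral_of_le ht]; exact (setIntegral_congr_fun measurableSet_Ioc inner_right).symm

end

theorem eqOn_zero_of_norm_le_mul_integral {E : Type*} [NormedAddCommGroup E] {g : ℝ → E}
    {M T : ℝ} (hg : Continuous g) (hbound : ∀ u ∈ Icc 0 T, ‖g u‖ ≤ M * ∫ τ in (0:ℝ)..u, ‖g τ‖) :
    EqOn g 0 (Icc 0 T) := by
  set Z : ℝ → ℝ := fun u => ∫ τ in (0:ℝ)..u, ‖g τ‖
  have hZ_deriv : ∀ u, HasDerivAt Z ‖g u‖ u := fun u =>
    (hg.norm.integral_hasStrictDerivAt 0 u).hasDerivAt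
  have hZ_nonneg : ∀ u ∈ Icc 0 T, 0 ≤ Z u := fun u hu =>
    integral_nonneg hu.1 fun τ _ => norm_nonneg _
  have hZ_zero : ∀ u ∈ Icc 0 T, Z u = 0 := by
    have := norm_le_gronwallBound_of_norm_deriv_right_le (a := 0) (b := T) (δ := 0) (ε := 0)
      (fun u _ => (hZ_deriv u).continuousAt.continuousWithinAt)
      (fun u _ => (hZ_deriv u).hasDerivWithinAt) (by simp [Z]) fun u hu => by
        rw [norm_norm, Real.norm_of_nonneg (hZ_nonneg u (Ico_subset_Icc_self hu)), add_zero]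
        exact hbound u (Ico_subset_Icc_self hu)
    intro u hu
    have hle := this u hu
    rw [gronwallBound_ε0, zero_mul, Real.norm_of_nonneg (hZ_nonneg u hu)] at hle
    exact le_antisymm hle (hZ_nonneg u hu)
  intro u hu
  have hle := hbound u hu
  rw [show (∫ τ in (0:ℝ)..u, ‖g τ‖) = 0 from hZ_zero u hu, mul_zero] at hle
  exact norm_le_zero_iff.mp hle

section Volterra

noncomputable def volterra (B : ℝ → ℝ → ℝ) (x : ℝ → ℝ) (t : ℝ) : ℝ :=
  ∫ τ in (0:ℝ)..t, B t τ * x τ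

variable {K B : ℝ → ℝ → ℝ} {x y : ℝ → ℝ}

theorem volterra_congr {t : ℝ} (ht : 0 ≤ t) (h : EqOn x y (Icc 0 t)) :
    volterra K x t = volterra K y t :=
  integral_congr fun τ hτ => by rw [uIcc_of_le ht] at hτ; simp only [h hτ]

theorem continuous_volterra (hB : Continuous (uncurry B)) (hx : Continuous x) :
    Continuous (volterra B x) :=
  continuous_parametric_intervalIntegral_of_continuous (hB.mul (hx.comp continuous_snd))
    continuous_id

theorem volterra_sub (hB : Continuous (uncurry B)) (hx : Continuous x) (hy : Continuous y)
    (t : ℝ) : volterra B x t - volterra B y t = volterra B (x - y) t := by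
  have hBt := hB.uncurry_left t
  simp only [volterra, Pi.sub_apply, mul_sub]
  exact (integral_sub ((hBt.mul hx).intervalIntegrable 0 t)
    ((hBt.mul hy).intervalIntegrable 0 t)).symm

theorem abs_volterra_le {M t : ℝ} (ht : 0 ≤ t) (hx : Continuous x)
    (hM : ∀ τ ∈ Icc 0 t, |B t τ| ≤ M) :
    |volterra B x t| ≤ M * ∫ τ in (0:ℝ)..t, |x τ| := by
  rw [← intervalIntegral.integral_const_mul, ← Real.norm_eq_abs]
  refine norm_integral_le_of_norm_le ht (.of_forall fun τ hτ => ?_)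
    ((continuous_const.mul hx.abs).intervalIntegrable (μ := volume) 0 t)
  rw [Real.norm_eq_abs, abs_mul]
  exact mul_le_mul_of_nonneg_right (hM τ (Ioc_subset_Icc_self hτ)) (abs_nonneg _)

theorem eqOn_zero_of_add_volterra_eq_zero {T : ℝ} (hB : Continuous (uncurry B))
    (hx : Continuous x) (h : ∀ t ∈ Icc 0 T, x t + volterra B x t = 0) : EqOn x 0 (Icc 0 T) := by
  obtain ⟨M, hM⟩ := (isCompact_Icc.prod isCompact_Icc).exists_bound_of_continuousOn
    hB.continuousOn (s := Icc (0:ℝ) T ×ˢ Icc (0:ℝ) T)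
  refine eqOn_zero_of_norm_le_mul_integral (M := M) hx fun u hu => ?_
  simp only [Real.norm_eq_abs]
  rw [eq_neg_of_add_eq_zero_left (h u hu), abs_neg]
  exact abs_volterra_le hu.1 hx fun τ hτ => hM (u, τ) ⟨hu, hτ.1, hτ.2.trans hu.2⟩

theorem volterra_eq_integral_add_volterra {t : ℝ} (ht : 0 ≤ t) (hB : Continuous (uncurry B))
    (hx : Continuous x) (hdiag : ∀ τ ∈ Icc 0 t, K τ τ = 1)
    (hderiv : ∀ τ ∈ Icc 0 t, ∀ s ∈ Icc τ t, HasDerivAt (K · τ) (B s τ) s) :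
    volterra K x t = ∫ s in (0:ℝ)..t, (x s + volterra B x s) := by
  have hK : EqOn (fun τ => K t τ * x τ) (fun τ => x τ + (∫ s in τ..t, B s τ) * x τ)
      (uIcc 0 t) := fun τ hτ => by
    rw [uIcc_of_le ht] at hτ
    have hKτ := integral_eq_sub_of_hasDerivAt
      (fun s hs => hderiv τ hτ s (by rwa [uIcc_of_le hτ.2] at hs))
      ((hB.uncurry_right τ).intervalIntegrable τ t)
    change K t τ * x τ = x τ + (∫ s in τ..t, B s τ) * x τ
    rw [hKτ, hdiag τ hτ]
    ring
  have hcont : Continuous fun τ => ∫ s in τ..t, B s τ := by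
    simp_rw [integral_symm t]
    exact (continuous_parametric_intervalIntegral_of_continuous (f := fun τ s => B s τ)
      (hB.comp continuous_swap) continuous_id).neg
  have hx_int := hx.intervalIntegrable (μ := volume) 0 t
  have hBx_int : IntervalIntegrable (fun τ => (∫ s in τ..t, B s τ) * x τ) volume 0 t :=
    (hcont.mul hx).intervalIntegrable 0 t
  calc volterra K x t = ∫ τ in (0:ℝ)..t, (x τ + (∫ s in τ..t, B s τ) * x τ) := integral_congr hK
    _ = (∫ τ in (0:ℝ)..t, x τ) + ∫ τ in (0:ℝ)..t, ∫ s in τ..t, B s τ * x τ := by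
        rw [integral_add hx_int hBx_int]
        simp only [intervalIntegral.integral_mul_const]
    _ = (∫ s in (0:ℝ)..t, x s) + ∫ s in (0:ℝ)..t, volterra B x s := by
        rw [intervalIntegral_integral_swap_triangle (F := fun s τ => B s τ * x τ)
          (hB.mul (hx.comp continuous_snd)) ht]
        rfl
    _ = ∫ s in (0:ℝ)..t, (x s + volterra B x s) :=
        (integral_add hx_int ((continuous_volterra hB hx).intervalIntegrable 0 t)).symm

theorem eqOn_of_volterra_eq {T : ℝ} (hT : 0 < T) (hB : Continuous (uncurry B))
    (hdiag : ∀ t ∈ Icc 0 T, K t t = 1)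
    (hderiv : ∀ t ∈ Icc 0 T, ∀ τ ∈ Icc 0 T, HasDerivAt (K · τ) (B t τ) t)
    (hx : Continuous x) (hy : Continuous y)
    (h : ∀ t ∈ Icc 0 T, volterra K x t = volterra K y t) : EqOn x y (Icc 0 T) := by
  have hsecond : ∀ {z : ℝ → ℝ}, Continuous z → ∀ t ∈ Icc 0 T,
      volterra K z t = ∫ s in (0:ℝ)..t, (z s + volterra B z s) := fun hz t ht =>
    volterra_eq_integral_add_volterra ht.1 hB hz (fun τ hτ => hdiag τ ⟨hτ.1, hτ.2.trans ht.2⟩)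
      fun τ hτ s hs => hderiv s ⟨hτ.1.trans hs.1, hs.2.trans ht.2⟩ τ ⟨hτ.1, hτ.2.trans ht.2⟩
  have heq : EqOn (fun s => x s + volterra B x s) (fun s => y s + volterra B y s) (Icc 0 T) :=
    eqOn_of_forall_integral_eq hT (hx.add (continuous_volterra hB hx))
      (hy.add (continuous_volterra hB hy)) fun t ht => by
        rw [← hsecond hx t ht, ← hsecond hy t ht, h t ht]
  have hzero : EqOn (x - y) 0 (Icc 0 T) :=
    eqOn_zero_of_add_volterra_eq_zero hB (hx.sub hy) fun t ht => by
      rw [Pi.sub_apply, ← volterra_sub hB hx hy]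
      linarith [heq ht]
  exact fun t ht => sub_eq_zero.mp (hzero ht)

end Volterra

theorem volterra_first_kind_uniqueness_general
    (T : ℝ) (hT : 0 < T)
    (K K' : ℝ → ℝ → ℝ) (f : ℝ → ℝ)
    (hKdiag : ∀ t ∈ Icc (0:ℝ) T, K t t = 1)
    (hK' : ContinuousOn (fun p : ℝ × ℝ => K' p.1 p.2) (Icc 0 T ×ˢ Icc 0 T))
    (hKderiv : ∀ t ∈ Icc (0:ℝ) T, ∀ τ ∈ Icc (0:ℝ) T,
      HasDerivAt (fun s => K s τ) (K' t τ) t)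
    (x₁ x₂ : ℝ → ℝ)
    (hx₁ : ContinuousOn x₁ (Icc 0 T)) (hx₂ : ContinuousOn x₂ (Icc 0 T))
    (hsol₁ : ∀ t ∈ Icc (0:ℝ) T, ∫ τ in (0:ℝ)..t, K t τ * x₁ τ = f t)
    (hsol₂ : ∀ t ∈ Icc (0:ℝ) T, ∫ τ in (0:ℝ)..t, K t τ * x₂ τ = f t) :
    ∀ t ∈ Icc (0:ℝ) T, x₁ t = x₂ t := by
  obtain ⟨B, hB, hBK'⟩ := exists_continuous_eqOn_Icc_prod hT.le hK'
  obtain ⟨y₁, hy₁, hxy₁⟩ := exists_continuous_eqOn_Icc hT.le hx₁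
  obtain ⟨y₂, hy₂, hxy₂⟩ := exists_continuous_eqOn_Icc hT.le hx₂
  have hderiv : ∀ t ∈ Icc 0 T, ∀ τ ∈ Icc 0 T, HasDerivAt (K · τ) (B t τ) t :=
    fun t ht τ hτ => hBK' t ht τ hτ ▸ hKderiv t ht τ hτ
  have hy : ∀ t ∈ Icc 0 T, volterra K y₁ t = volterra K y₂ t := fun t ht => by
    have hsub : Icc 0 t ⊆ Icc 0 T := Icc_subset_Icc le_rfl ht.2
    rw [volterra_congr ht.1 (hxy₁.mono hsub), volterra_congr ht.1 (hxy₂.mono hsub)]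
    exact (hsol₁ t ht).trans (hsol₂ t ht).symm
  intro t ht
  rw [← hxy₁ ht, ← hxy₂ ht]
  exact eqOn_of_volterra_eq hT hB hKdiag hderiv hy₁ hy₂ hy ht

theorem volterra_first_kind_uniqueness
    (T : ℝ) (hT : 0 < T)
    (K K' : ℝ → ℝ → ℝ) (f f' : ℝ → ℝ)
    (hK : ContinuousOn (fun p : ℝ × ℝ => K p.1 p.2) (Icc 0 T ×ˢ Icc 0 T))
    (hKdiag : ∀ t ∈ Icc (0:ℝ) T, K t t = 1)
    (hK' : ContinuousOn (fun p : ℝ × ℝ => K' p.1 p.2) (Icc 0 T ×ˢ Icc 0 T))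
    (hKderiv : ∀ t ∈ Icc (0:ℝ) T, ∀ τ ∈ Icc (0:ℝ) T,
      HasDerivAt (fun s => K s τ) (K' t τ) t)
    (hf' : ContinuousOn f' (Icc 0 T))
    (hfderiv : ∀ t ∈ Icc (0:ℝ) T, HasDerivAt f (f' t) t)
    (hf0 : f 0 = 0)
    (x₁ x₂ : ℝ → ℝ)
    (hx₁ : ContinuousOn x₁ (Icc 0 T)) (hx₂ : ContinuousOn x₂ (Icc 0 T))
    (hsol₁ : ∀ t ∈ Icc (0:ℝ) T, ∫ τ in (0:ℝ)..t, K t τ * x₁ τ = f t)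
    (hsol₂ : ∀ t ∈ Icc (0:ℝ) T, ∫ τ in (0:ℝ)..t, K t τ * x₂ τ = f t) :
    ∀ t ∈ Icc (0:ℝ) T, x₁ t = x₂ t :=
  volterra_first_kind_uniqueness_general T hT K K' f hKdiag hK' hKderiv x₁ x₂ hx₁ hx₂ hsol₁ hsol₂
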